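/- The automorphism group of the non-zero component graph of GF(2)^n has exactly n! elements. -/

import Mathlib

/-- Vectors in GF(q)^n. -/
abbrev Vec (n q : ℕ) := Fin n → ZMod q

/-- Support of a vector: indices of nonzero coordinates. -/
def supp {n q : ℕ} (v : Vec n q) : Finset (Fin n) :=
  Finset.univ.filter (fun i => v i ≠ 0)

/-- Vertices of the non-zero component graph: nonzero vectors. -/
abbrev Vtx (n q : ℕ) := {v : Vec n q // v ≠ 0}

/-- The non-zero component graph: distinct nonzero vectors adjacent iff supports intersect. -/
def NZC (n q : ℕ) : SimpleGraph (Vtx n q) where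
  Adj u v := u ≠ v ∧ ∃ i, u.val i ≠ 0 ∧ v.val i ≠ 0
  symm := ⟨fun u v ⟨h, i, hu, hv⟩ => ⟨h.symm, i, hv, hu⟩⟩
  loopless := ⟨fun u h => h.1 rfl⟩

instance {n q : ℕ} : DecidableRel (NZC n q).Adj := fun u v =>
  inferInstanceAs (Decidable (u ≠ v ∧ ∃ i, u.val i ≠ 0 ∧ v.val i ≠ 0))

/-- The standard basis vector b_l as a vertex of the graph (q = 2). -/
def bVec {n : ℕ} (l : Fin n) : Vtx n 2 :=
  ⟨Pi.single l 1, fun h => one_ne_zero (α := ZMod 2) (by simpa using congrFun h l)⟩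

lemma zmod2_cases : ∀ a : ZMod 2, a = 0 ∨ a = 1 := by decide

lemma vtx_ext {n : ℕ} {u v : Vtx n 2} (h : ∀ i, (u.val i ≠ 0 ↔ v.val i ≠ 0)) : u = v := by
  apply Subtype.ext
  funext i
  have hi := h i
  rcases zmod2_cases (u.val i) with h1 | h1 <;> rcases zmod2_cases (v.val i) with h2 | h2 <;>
    simp [h1, h2] at hi ⊢

lemma single_ne_zero_iff {n : ℕ} (l i : Fin n) : (bVec l).val i ≠ 0 ↔ i = l := by
  show (Pi.single l (1 : ZMod 2) : Vec n 2) i ≠ 0 ↔ i = l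
  constructor
  · intro h
    by_contra hne
    exact h (Pi.single_eq_of_ne hne 1)
  · rintro rfl
    simp

lemma bVec_inj {n : ℕ} {i j : Fin n} (h : bVec i = bVec j) : i = j := by
  have := congrFun (congrArg Subtype.val h) i
  simp only [bVec, Pi.single_eq_same] at this
  by_contra hne
  rw [Pi.single_eq_of_ne hne] at this
  exact one_ne_zero this

/-- membership in support characterized by adjacency-or-equality with basis vector. -/
lemma mem_supp_iff {n : ℕ} (w : Vtx n 2) (j : Fin n) :
    w.val j ≠ 0 ↔ ((NZC n 2).Adj (bVec j) w ∨ bVec j = w) := by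
  constructor
  · intro h
    by_cases he : bVec j = w
    · exact Or.inr he
    · exact Or.inl ⟨he, j, by simp [bVec], h⟩
  · rintro (⟨-, i, hi, hw⟩ | he)
    · rwa [(single_ne_zero_iff j i).mp hi] at hw
    · rw [← he]; simp [bVec]

/-- The clique-neighborhood property. -/
def ClP {n : ℕ} (u : Vtx n 2) : Prop :=
  ∀ v w, (NZC n 2).Adj u v → (NZC n 2).Adj u w → v = w ∨ (NZC n 2).Adj v w

lemma clP_iff {n : ℕ} (u : Vtx n 2) : ClP u ↔ ∃ j, u = bVec j := by
  constructor
  · intro hcl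
    have hne : ∃ j, u.val j ≠ 0 := by
      by_contra h
      push_neg at h
      exact u.prop (funext fun i => h i)
    obtain ⟨j, hj⟩ := hne
    refine ⟨j, ?_⟩
    apply vtx_ext
    intro i
    rw [single_ne_zero_iff j i]
    constructor
    · intro hi
      by_contra hij
      have hub_i : u ≠ bVec i := by
        intro h
        have := hj
        rw [h] at this
        exact hij ((single_ne_zero_iff i j).mp this).symm
      have hub_j : u ≠ bVec j := by
        intro h
        rw [h] at hi
        exact hij ((single_ne_zero_iff j i).mp hi)
      have a1 : (NZC n 2).Adj u (bVec i) := ⟨hub_i, i, hi, by simp [bVec]⟩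
      have a2 : (NZC n 2).Adj u (bVec j) := ⟨hub_j, j, hj, by simp [bVec]⟩
      rcases hcl _ _ a1 a2 with h | ⟨-, k, hk1, hk2⟩
      · exact hij (bVec_inj h)
      · exact hij (((single_ne_zero_iff i k).mp hk1).symm.trans ((single_ne_zero_iff j k).mp hk2))
    · rintro rfl
      exact hj
  · rintro ⟨j, rfl⟩
    intro v w hv hw
    by_cases hvw : v = w
    · exact Or.inl hvw
    · refine Or.inr ⟨hvw, j, ?_, ?_⟩
      · obtain ⟨-, i, hi, hv'⟩ := hv
        rwa [(single_ne_zero_iff j i).mp hi] at hv'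
      · obtain ⟨-, i, hi, hw'⟩ := hw
        rwa [(single_ne_zero_iff j i).mp hi] at hw'

lemma clP_map {n : ℕ} (f : NZC n 2 ≃g NZC n 2) (u : Vtx n 2) (h : ClP u) : ClP (f u) := by
  intro v w hv hw
  rcases h (f.symm v) (f.symm w)
    (by rw [← f.map_adj_iff]; simpa using hv)
    (by rw [← f.map_adj_iff]; simpa using hw) with h' | h'
  · exact Or.inl (by simpa using congrArg f h')
  · rw [← f.map_adj_iff] at h'
    simpa using Or.inr h'

/-- Graph automorphism induced by a permutation of coordinates. -/
def permAut {n : ℕ} (σ : Equiv.Perm (Fin n)) : NZC n 2 ≃g NZC n 2 where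
  toFun u := ⟨u.val ∘ σ.symm, fun h => u.prop (funext fun i => by
    simpa using congrFun h (σ i))⟩
  invFun u := ⟨u.val ∘ σ, fun h => u.prop (funext fun i => by
    simpa using congrFun h (σ.symm i))⟩
  left_inv u := by apply Subtype.ext; funext i; simp
  right_inv u := by apply Subtype.ext; funext i; simp
  map_rel_iff' := by
    intro u v
    constructor
    · rintro ⟨hne, i, hu, hv⟩
      refine ⟨fun h => hne (by rw [h]), σ.symm i, hu, hv⟩
    · rintro ⟨hne, i, hu, hv⟩
      refine ⟨fun h => hne ?_, σ i, by simpa using hu, by simpa using hv⟩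
      apply Subtype.ext; funext j
      have := congrFun (congrArg Subtype.val h) (σ j)
      simpa using this

lemma permAut_bVec {n : ℕ} (σ : Equiv.Perm (Fin n)) (i : Fin n) :
    permAut σ (bVec i) = bVec (σ i) := by
  apply Subtype.ext
  funext j
  show ((Pi.single i (1 : ZMod 2) : Vec n 2) ∘ σ.symm) j = (Pi.single (σ i) (1 : ZMod 2) : Vec n 2) j
  simp only [Function.comp_apply]
  by_cases h : j = σ i
  · subst h
    rw [Equiv.symm_apply_apply]
    simp
  · rw [Pi.single_eq_of_ne h, Pi.single_eq_of_ne (fun hc => h (by rw [← hc]; simp))]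

lemma permAut_bijective {n : ℕ} :
    Function.Bijective (permAut (n := n)) := by
  constructor
  · intro σ τ h
    ext i
    have := congrArg (fun f : NZC n 2 ≃g NZC n 2 => f (bVec i)) h
    simp only [permAut_bVec] at this
    exact congrArg Fin.val (bVec_inj this)
  · intro f
    -- f maps basis vectors to basis vectors
    have hmap : ∀ i, ∃ j, f (bVec i) = bVec j := by
      intro i
      exact (clP_iff _).mp (clP_map f (bVec i) ((clP_iff _).mpr ⟨i, rfl⟩))
    choose g hg using hmap
    have hginj : Function.Injective g := by
      intro a b hab
      apply bVec_inj
      apply f.injective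
      rw [hg a, hg b, hab]
    let σ : Equiv.Perm (Fin n) := Equiv.ofBijective g (Finite.injective_iff_bijective.mp hginj)
    refine ⟨σ, ?_⟩
    -- show permAut σ = f
    have key : ∀ (u : Vtx n 2) (i : Fin n), (f u).val (g i) ≠ 0 ↔ u.val i ≠ 0 := by
      intro u i
      rw [mem_supp_iff, mem_supp_iff u i, ← hg i]
      constructor
      · rintro (h | h)
        · exact Or.inl (by rwa [f.map_adj_iff] at h)
        · exact Or.inr (f.injective h)
      · rintro (h | h)
        · exact Or.inl (by rwa [f.map_adj_iff])
        · exact Or.inr (congrArg f h)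
    ext u : 1
    apply vtx_ext
    intro j
    show u.val (σ.symm j) ≠ 0 ↔ (f u).val j ≠ 0
    have hj : g (σ.symm j) = j := σ.apply_symm_apply j
    rw [← key u (σ.symm j), hj]

theorem stmt_11 (n : ℕ) : Nat.card (NZC n 2 ≃g NZC n 2) = n.factorial := by
  rw [← Nat.card_congr (Equiv.ofBijective _ (permAut_bijective (n := n)))]
  simp [Nat.card_eq_fintype_card, Fintype.card_perm, Fintype.card_fin]
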